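/- Let T > 0, σ ∈ ℕ, p ∈ [1,∞), and let P ⊆ ℝ_{≥0}^σ be a polytope (P = conv(F) for a finite set F ⊆ ℝ_{≥0}^σ). For b ∈ {0,1} and 0 ≤ t₁ ≤ … ≤ t_σ, let u_{b;t₁,…,t_σ} : [0,∞) → {0,1} be defined by u_{b;t₁,…,t_σ}(t) = b if |{i : t_i ≤ t}| is even and 1 − b otherwise, and let D_P ⊆ L^p(0,T) be the set of all u such that u = u_{b;t₁,…,t_σ} almost everywhere on (0,T) for some b ∈ {0,1} and some sorted (t₁,…,t_σ) ∈ P. Let I₁,…,I_M be pairwise disjoint nonempty bounded open subintervals of (0,T) and define Π : L^p(0,T) → ℝ^M by Π(u)_i = (1/λ(I_i)) ∫_{I_i} u dλ. Then C_{D_P,Π} := conv{Π(u) : u ∈ D_P} is a polytope in ℝ^M, i.e., there exists a finite set F' ⊆ ℝ^M with C_{D_P,Π} = conv(F'). -/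

import Mathlib

open MeasureTheory Set Filter
open scoped ENNReal

/-
For sorted switching points the step function is `b + (1 - 2b) ∑ⱼ (-1)ʲ 1_{[t j, ∞)}`, so its
averages are affine in the lengths `|(A i, B i) ∩ [t j, ∞)|`. Classifying `t` by the position of
each `t j` relative to `A i` and `B i` cuts `ℝ^σ` into finitely many polyhedra on each of which
these lengths are affine in `t`. Hence `C_{D_P,Π}` is the convex hull of finitely many affine
images of sets `P ∩ Q` with `Q` a polyhedron, and it remains to see that such an intersection is
a polytope.

For one half-space `ℓ ≤ c` the new vertices are the points where segments between vertices
on either side cross `ℓ = c`. A point of the hull below the hyperplane lies on a segment from a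
point `a` of the hull of the lower vertices towards a point `b` of the hull of the upper ones, so
between `a` and the crossing point of `[a, b]`. That crossing point is a convex combination of
the vertex crossings, because seen from a fixed point the crossing map is a perspective map and
sends segments to segments.
-/

/-- The parametrized binary step function `u_{b;t₁,…,t_σ}`: it takes the value
`b` at `x` if the number of switching points `t_i ≤ x` is even, and `1 - b`
otherwise. -/
noncomputable def switchFun (σ : ℕ) (b : ℝ) (t : Fin σ → ℝ) : ℝ → ℝ :=
  fun x => if Even ((Finset.univ.filter fun i => t i ≤ x).card) then b else 1 - b

section CutPoint

variable {E : Type*} [AddCommGroup E] [Module ℝ E] (ℓ : E →ₗ[ℝ] ℝ) (c : ℝ)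

/-- The point where the line through `x` and `y` meets the hyperplane `ℓ = c`; the formula is
symmetric in `x` and `y`, even when `ℓ x = ℓ y` (and both sides are `0`). -/
noncomputable def cutPt (x y : E) : E :=
  (ℓ y - ℓ x)⁻¹ • ((ℓ y - c) • x + (c - ℓ x) • y)

variable {ℓ c}

theorem cutPt_comm (x y : E) : cutPt ℓ c x y = cutPt ℓ c y x := by
  rw [cutPt, cutPt, ← neg_sub (ℓ x), inv_neg, neg_smul, ← smul_neg]
  congr 1
  module

theorem cutPt_mem_segment {x y : E} (hx : ℓ x ≤ c) (hy : c < ℓ y) :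
    cutPt ℓ c x y ∈ segment ℝ x y := by
  have hd : 0 < ℓ y - ℓ x := by linarith
  refine ⟨(ℓ y - c) / (ℓ y - ℓ x), (c - ℓ x) / (ℓ y - ℓ x), by positivity, by positivity,
    by field_simp; ring, ?_⟩
  rw [cutPt, smul_add, smul_smul, smul_smul, div_eq_inv_mul, div_eq_inv_mul]

theorem map_cutPt {x y : E} (h : ℓ x ≠ ℓ y) : ℓ (cutPt ℓ c x y) = c := by
  have hd : ℓ y - ℓ x ≠ 0 := sub_ne_zero.mpr h.symm
  simp only [cutPt, map_smul, map_add, smul_eq_mul]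
  field_simp
  ring

/-- Seen from a fixed `x`, `y ↦ cutPt ℓ c x y` is a perspective map: it sends segments on one
side of the level set of `x` to segments. -/
theorem cutPt_mem_segment_of_sameSide {x y₁ y₂ : E}
    (hside : 0 < (ℓ y₁ - ℓ x) * (ℓ y₂ - ℓ x)) {a b : ℝ} (ha : 0 ≤ a) (hb : 0 ≤ b)
    (hab : a + b = 1) :
    cutPt ℓ c x (a • y₁ + b • y₂) ∈ segment ℝ (cutPt ℓ c x y₁) (cutPt ℓ c x y₂) := by
  set d₁ := ℓ y₁ - ℓ x
  set d₂ := ℓ y₂ - ℓ x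
  have hd : ℓ (a • y₁ + b • y₂) - ℓ x = a * d₁ + b * d₂ := by
    simp only [map_add, map_smul, smul_eq_mul, d₁, d₂]
    linear_combination (ℓ x) * hab
  have hd₁ : d₁ ≠ 0 := left_ne_zero_of_mul hside.ne'
  have hd₂ : d₂ ≠ 0 := right_ne_zero_of_mul hside.ne'
  have hpos : ∀ {u v p q : ℝ}, 0 ≤ p → 0 ≤ q → p + q = 1 → 0 < u * v →
      0 < (p * u + q * v) * u := by
    intro u v p q hp hq hpq huv
    rcases hp.eq_or_lt with rfl | hp
    · obtain rfl : q = 1 := by linarith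
      linarith
    · nlinarith [mul_pos hp (mul_self_pos.mpr (left_ne_zero_of_mul huv.ne')),
        mul_nonneg hq huv.le]
  have hD₁ := hpos ha hb hab hside
  have hD₂ : 0 < (a * d₁ + b * d₂) * d₂ := by
    rw [add_comm]; exact hpos hb ha (by linarith) (by linarith)
  have hne : a * d₁ + b * d₂ ≠ 0 := left_ne_zero_of_mul hD₁.ne'
  refine ⟨a * d₁ / (a * d₁ + b * d₂), b * d₂ / (a * d₁ + b * d₂), ?_, ?_,
    by field_simp, ?_⟩
  · rw [← mul_div_mul_right _ _ hd₁]
    exact div_nonneg (by nlinarith [mul_self_nonneg d₁]) hD₁.le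
  · rw [← mul_div_mul_right _ _ hd₂]
    exact div_nonneg (by nlinarith [mul_self_nonneg d₂]) hD₂.le
  · simp only [cutPt, hd, smul_add, smul_smul]
    simp only [map_add, map_smul, smul_eq_mul, d₁, d₂] at hd₁ hd₂ hne ⊢
    obtain rfl : b = 1 - a := by linarith
    match_scalars
    · field_simp
      ring
    · field_simp
    · field_simp

theorem mem_segment_cutPt {a b z : E} (ha : ℓ a ≤ c) (hb : c < ℓ b) (hz : z ∈ segment ℝ a b)
    (hzc : ℓ z ≤ c) : z ∈ segment ℝ a (cutPt ℓ c a b) := by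
  obtain ⟨p, q, hp, hq, hpq, rfl⟩ := hz
  obtain rfl : p = 1 - q := by linarith
  have hq_le : q * (ℓ b - ℓ a) ≤ c - ℓ a := by
    simp only [map_add, map_smul, smul_eq_mul] at hzc
    linarith
  rcases ha.eq_or_lt with hac | hac
  · obtain rfl : q = 0 := by nlinarith
    simpa using left_mem_segment ℝ a (cutPt ℓ c a b)
  have hd : ℓ b - ℓ a ≠ 0 := by linarith
  refine ⟨1 - q * (ℓ b - ℓ a) / (c - ℓ a), q * (ℓ b - ℓ a) / (c - ℓ a), ?_,
    div_nonneg (mul_nonneg hq (by linarith)) (by linarith),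
    by ring, ?_⟩
  · rw [sub_nonneg, div_le_one (by linarith)]
    exact hq_le
  · rw [cutPt]
    have hca : c - ℓ a ≠ 0 := by linarith
    match_scalars
    · field_simp
      ring
    · field_simp

theorem convex_setOf_cutPt_mem {x : E} {H K : Set E} (hH : Convex ℝ H) (hK : Convex ℝ K)
    (hside : ∀ y₁ ∈ H, ∀ y₂ ∈ H, 0 < (ℓ y₁ - ℓ x) * (ℓ y₂ - ℓ x)) :
    Convex ℝ {y ∈ H | cutPt ℓ c x y ∈ K} :=
  fun _ ⟨hy₁, hK₁⟩ _ ⟨hy₂, hK₂⟩ _ _ ha hb hab =>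
    ⟨hH hy₁ hy₂ ha hb hab, hK.segment_subset hK₁ hK₂
      (cutPt_mem_segment_of_sameSide (hside _ hy₁ _ hy₂) ha hb hab)⟩

end CutPoint

section Polytope

variable {E F : Type*} [AddCommGroup E] [Module ℝ E] [AddCommGroup F] [Module ℝ F]

def IsPolytope (s : Set E) : Prop :=
  ∃ G : Set E, G.Finite ∧ convexHull ℝ G = s

def IsPolyhedron (s : Set E) : Prop :=
  ∃ H : Set ((E →ₗ[ℝ] ℝ) × ℝ), H.Finite ∧ {x | ∀ h ∈ H, h.1 x ≤ h.2} = s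

theorem isPolyhedron_halfSpace (ℓ : E →ₗ[ℝ] ℝ) (c : ℝ) : IsPolyhedron {x | ℓ x ≤ c} :=
  ⟨{(ℓ, c)}, finite_singleton _, by simp⟩

theorem IsPolyhedron.inter {s t : Set E} (hs : IsPolyhedron s) (ht : IsPolyhedron t) :
    IsPolyhedron (s ∩ t) := by
  obtain ⟨H, hH, rfl⟩ := hs
  obtain ⟨H', hH', rfl⟩ := ht
  exact ⟨H ∪ H', hH.union hH', by ext; simp [or_imp, forall_and]⟩

theorem IsPolyhedron.iInter {ι : Sort*} [Finite ι] {s : ι → Set E}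
    (hs : ∀ i, IsPolyhedron (s i)) : IsPolyhedron (⋂ i, s i) := by
  choose H hH hHs using hs
  refine ⟨⋃ i, H i, finite_iUnion hH, ?_⟩
  ext x
  simp only [← hHs, mem_ofPred_eq, mem_iInter, mem_iUnion]
  exact ⟨fun h i h' hh' => h h' ⟨i, hh'⟩, fun h h' ⟨i, hh'⟩ => h i h' hh'⟩

theorem IsPolyhedron.preimage {s : Set F} (hs : IsPolyhedron s) (f : E →ₗ[ℝ] F) :
    IsPolyhedron (f ⁻¹' s) := by
  obtain ⟨H, hH, rfl⟩ := hs
  refine ⟨(fun h => (h.1 ∘ₗ f, h.2)) '' H, hH.image _, ?_⟩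
  ext x
  simp only [mem_preimage, forall_mem_image, LinearMap.comp_apply]
  rfl

theorem isPolyhedron_Iic (a : ℝ) : IsPolyhedron (Iic a) :=
  isPolyhedron_halfSpace LinearMap.id a

theorem isPolyhedron_Ici (a : ℝ) : IsPolyhedron (Ici a) := by
  convert isPolyhedron_halfSpace (-LinearMap.id) (-a) using 1
  ext
  simp

theorem isPolyhedron_Icc (a b : ℝ) : IsPolyhedron (Icc a b) := by
  rw [← Ici_inter_Iic]
  exact (isPolyhedron_Ici a).inter (isPolyhedron_Iic b)

theorem isPolyhedron_setOf_le (f g : E →ₗ[ℝ] ℝ) : IsPolyhedron {x | f x ≤ g x} := by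
  simpa [sub_nonpos] using isPolyhedron_halfSpace (f - g) 0

theorem isPolyhedron_setOf_monotone {ι : Type*} [Preorder ι] [Finite ι] :
    IsPolyhedron {x : ι → ℝ | Monotone x} := by
  have h : {x : ι → ℝ | Monotone x} = ⋂ (i : ι) (j : ι) (_ : i ≤ j), {x | x i ≤ x j} := by
    ext x
    simp [Monotone]
  rw [h]
  exact .iInter fun i => .iInter fun j => .iInter fun _ =>
    isPolyhedron_setOf_le (LinearMap.proj (R := ℝ) (φ := fun _ : ι => ℝ) i) (LinearMap.proj j)

theorem IsPolytope.convexHull_eq {s : Set E} (hs : IsPolytope s) : convexHull ℝ s = s := by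
  obtain ⟨G, -, rfl⟩ := hs
  exact (convex_convexHull ℝ G).convexHull_eq

theorem IsPolytope.exists_finset_eq {s : Set E} (hs : IsPolytope s) :
    ∃ G : Finset E, s = convexHull ℝ (G : Set E) := by
  obtain ⟨G, hG, rfl⟩ := hs
  exact ⟨hG.toFinset, by rw [hG.coe_toFinset]⟩

theorem IsPolytope.image {s : Set E} (hs : IsPolytope s) (g : E →ᵃ[ℝ] F) :
    IsPolytope (g '' s) := by
  obtain ⟨G, hG, rfl⟩ := hs
  exact ⟨g '' G, hG.image g, (g.image_convexHull G).symm⟩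

theorem isPolytope_convexHull_iUnion {ι : Type*} [Finite ι] {X : ι → Set E}
    (h : ∀ i, IsPolytope (convexHull ℝ (X i))) : IsPolytope (convexHull ℝ (⋃ i, X i)) := by
  choose G hG hGX using h
  refine ⟨⋃ i, G i, finite_iUnion hG, ?_⟩
  have hG' := (convexHull ℝ).closure_iSup_closure G
  have hX := (convexHull ℝ).closure_iSup_closure X
  simp only [iSup_eq_iUnion, hGX] at hG' hX
  rw [← hG', hX]

variable {ℓ : E →ₗ[ℝ] ℝ} {c : ℝ}

variable (ℓ c) in
def cutSet (G : Set E) : Set E :=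
  {x ∈ G | ℓ x ≤ c} ∪ image2 (cutPt ℓ c) {x ∈ G | ℓ x ≤ c} {y ∈ G | c < ℓ y}

theorem cutPt_mem_convexHull_cutSet {G : Set E} {a b : E}
    (ha : a ∈ convexHull ℝ {x ∈ G | ℓ x ≤ c}) (hb : b ∈ convexHull ℝ {y ∈ G | c < ℓ y}) :
    cutPt ℓ c a b ∈ convexHull ℝ (cutSet ℓ c G) := by
  set K := convexHull ℝ (cutSet ℓ c G)
  have hK : Convex ℝ K := convex_convexHull ℝ _
  have hb' : c < ℓ b :=
    convexHull_min (fun _ hy => hy.2) (convex_halfSpace_gt ℓ.isLinear c) hb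
  have hvertex : ∀ x ∈ {x ∈ G | ℓ x ≤ c},
      convexHull ℝ {y ∈ G | c < ℓ y} ⊆ {y ∈ {y | c < ℓ y} | cutPt ℓ c x y ∈ K} :=
    fun x hx => convexHull_min
      (fun y hy => ⟨hy.2, subset_convexHull ℝ _ (Or.inr (mem_image2_of_mem hx hy))⟩)
      (convex_setOf_cutPt_mem (convex_halfSpace_gt ℓ.isLinear c) hK fun y₁ hy₁ y₂ hy₂ =>
        mul_pos (by linarith [hx.2, hy₁.out]) (by linarith [hx.2, hy₂.out]))
  have hhull : convexHull ℝ {x ∈ G | ℓ x ≤ c} ⊆ {x ∈ {x | ℓ x ≤ c} | cutPt ℓ c b x ∈ K} :=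
    convexHull_min (fun x hx => ⟨hx.2, cutPt_comm x b ▸ (hvertex x hx hb).2⟩)
      (convex_setOf_cutPt_mem (convex_halfSpace_le ℓ.isLinear c) hK fun x₁ hx₁ x₂ hx₂ =>
        mul_pos_of_neg_of_neg (by linarith [show ℓ x₁ ≤ c from hx₁])
          (by linarith [show ℓ x₂ ≤ c from hx₂]))
  exact cutPt_comm a b ▸ (hhull ha).2

theorem convexHull_inter_halfSpace_subset (G : Set E) :
    convexHull ℝ G ∩ {x | ℓ x ≤ c} ⊆ convexHull ℝ (cutSet ℓ c G) := by
  set Gl := {x ∈ G | ℓ x ≤ c}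
  set Gu := {y ∈ G | c < ℓ y}
  have hlK : convexHull ℝ Gl ⊆ convexHull ℝ (cutSet ℓ c G) := convexHull_mono subset_union_left
  have hl : convexHull ℝ Gl ⊆ {x | ℓ x ≤ c} :=
    convexHull_min (fun _ hx => hx.2) (convex_halfSpace_le ℓ.isLinear c)
  have hu : convexHull ℝ Gu ⊆ {y | c < ℓ y} :=
    convexHull_min (fun _ hy => hy.2) (convex_halfSpace_gt ℓ.isLinear c)
  rintro z ⟨hz, hzc⟩
  have hG : G = Gl ∪ Gu := by
    ext x
    simp only [mem_union, mem_sep_iff, Gl, Gu, ← and_or_left, le_or_gt, and_true]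
  rcases Gl.eq_empty_or_nonempty with hGl | hGl
  · rw [hG, hGl, empty_union] at hz
    exact absurd (show c < ℓ z from hu hz) (not_lt.mpr hzc)
  rcases Gu.eq_empty_or_nonempty with hGu | hGu
  · rw [hG, hGu, union_empty] at hz
    exact hlK hz
  rw [hG, convexHull_union hGl hGu] at hz
  obtain ⟨a, ha, b, hb, hzab⟩ := mem_convexJoin.mp hz
  exact (convex_convexHull ℝ _).segment_subset (hlK ha) (cutPt_mem_convexHull_cutSet ha hb)
    (mem_segment_cutPt (hl ha) (hu hb) hzab hzc)

theorem IsPolytope.inter_halfSpace {P : Set E} (hP : IsPolytope P) (ℓ : E →ₗ[ℝ] ℝ) (c : ℝ) :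
    IsPolytope (P ∩ {x | ℓ x ≤ c}) := by
  obtain ⟨G, hG, rfl⟩ := hP
  refine ⟨cutSet ℓ c G, (hG.sep _).union ((hG.sep _).image2 _ (hG.sep _)),
    subset_antisymm ?_ (convexHull_inter_halfSpace_subset G)⟩
  refine convexHull_min ?_ ((convex_convexHull ℝ G).inter (convex_halfSpace_le ℓ.isLinear c))
  rintro _ (⟨hx, hxc⟩ | ⟨x, hx, y, hy, rfl⟩)
  · exact ⟨subset_convexHull ℝ G hx, hxc⟩
  · exact ⟨segment_subset_convexHull hx.1 hy.1 (cutPt_mem_segment hx.2 hy.2),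
      (map_cutPt (by linarith [hx.2, hy.2])).le⟩

theorem IsPolytope.inter_isPolyhedron {P Q : Set E} (hP : IsPolytope P) (hQ : IsPolyhedron Q) :
    IsPolytope (P ∩ Q) := by
  obtain ⟨H, hH, rfl⟩ := hQ
  induction H, hH using Set.Finite.induction_on with
  | empty => simpa using hP
  | @insert h H _ _ ih =>
    have : P ∩ {x | ∀ h' ∈ insert h H, h'.1 x ≤ h'.2} =
        (P ∩ {x | ∀ h' ∈ H, h'.1 x ≤ h'.2}) ∩ {x | h.1 x ≤ h.2} := by
      ext
      simp only [mem_inter_iff, mem_ofPred_eq, forall_mem_insert]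
      tauto
    rw [this]
    exact ih.inter_halfSpace h.1 h.2

theorem IsPolytope.convexHull_image_of_eqOn {ι : Type*} [Finite ι] {P : Set E}
    (hP : IsPolytope P) {R : ι → Set E} (hR : ∀ k, IsPolyhedron (R k)) {f : E → F}
    {g : ι → E →ᵃ[ℝ] F} (hfg : ∀ k, EqOn f (g k) (R k)) :
    IsPolytope (convexHull ℝ (f '' (P ∩ ⋃ k, R k))) := by
  rw [inter_iUnion, image_iUnion]
  refine isPolytope_convexHull_iUnion fun k => ?_
  have h := (hP.inter_isPolyhedron (hR k)).image (g k)
  rwa [((hfg k).mono inter_subset_right).image_eq, h.convexHull_eq]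

end Polytope

section SwitchFunction

variable {σ : ℕ}

theorem Monotone.le_iff_lt_card_filter {α : Type*} [Preorder α] [DecidableLE α]
    {t : Fin σ → α} (ht : Monotone t) (x : α) (j : Fin σ) :
    t j ≤ x ↔ (j : ℕ) < (Finset.univ.filter fun i => t i ≤ x).card := by
  constructor
  · intro hj
    have hsub : Finset.Iic j ⊆ Finset.univ.filter fun i => t i ≤ x := fun i hi => by
      simpa using (ht (Finset.mem_Iic.mp hi)).trans hj
    simpa using Finset.card_le_card hsub
  · intro hj
    by_contra hx
    have hsub : (Finset.univ.filter fun i => t i ≤ x) ⊆ Finset.Iio j := fun i hi => by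
      simp only [Finset.mem_filter, Finset.mem_univ, true_and] at hi
      exact Finset.mem_Iio.mpr (lt_of_not_ge fun hji => hx ((ht hji).trans hi))
    have := Finset.card_le_card hsub
    simp only [Fin.card_Iio] at this
    omega

theorem switchFun_eq_sum_indicator (b : ℝ) {t : Fin σ → ℝ} (ht : Monotone t) (x : ℝ) :
    switchFun σ b t x =
      b + (1 - 2 * b) * ∑ j : Fin σ, (-1) ^ (j : ℕ) * (Ici (t j)).indicator 1 x := by
  set k := (Finset.univ.filter fun i => t i ≤ x).card
  have hk : k ≤ σ := (Finset.card_filter_le _ _).trans_eq (Finset.card_fin σ)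
  have hsum : ∑ j : Fin σ, (-1 : ℝ) ^ (j : ℕ) * (Ici (t j)).indicator 1 x =
      ∑ n ∈ Finset.range k, (-1 : ℝ) ^ n := by
    have h : ∀ j : Fin σ, (-1 : ℝ) ^ (j : ℕ) * (Ici (t j)).indicator 1 x =
        if (j : ℕ) < k then (-1) ^ (j : ℕ) else 0 := fun j => by
      simp only [indicator_apply, mem_Ici, Pi.one_apply, mul_ite, mul_one, mul_zero,
        ht.le_iff_lt_card_filter x j, k]
    rw [Finset.sum_congr rfl fun j _ => h j,
      Fin.sum_univ_eq_sum_range (fun n => if n < k then (-1 : ℝ) ^ n else 0),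
      ← Finset.sum_subset (Finset.range_subset_range.mpr hk) fun n _ hn => by
        simp_all]
    exact Finset.sum_congr rfl fun n hn => if_pos (Finset.mem_range.mp hn)
  rw [hsum, neg_one_geom_sum, switchFun]
  split_ifs <;> ring

theorem measurable_switchFun (b : ℝ) (t : Fin σ → ℝ) : Measurable (switchFun σ b t) := by
  have hcard : (fun x => (Finset.univ.filter fun i => t i ≤ x).card) =
      fun x => ∑ i : Fin σ, if t i ≤ x then 1 else 0 := by
    ext x
    rw [Finset.card_filter]
  have hmeas : Measurable fun x => (Finset.univ.filter fun i => t i ≤ x).card := by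
    rw [hcard]
    exact Finset.measurable_sum _ fun i _ =>
      Measurable.ite measurableSet_Ici measurable_const measurable_const
  exact (measurable_from_nat (f := fun n => if Even n then b else 1 - b)).comp hmeas

theorem memLp_switchFun (b : ℝ) (t : Fin σ → ℝ) (p : ℝ≥0∞) {U : Set ℝ} (hU : volume U < ⊤) :
    MemLp (switchFun σ b t) p (volume.restrict U) := by
  have : IsFiniteMeasure (volume.restrict U) := isFiniteMeasure_restrict.mpr hU.ne
  refine .of_bound (measurable_switchFun b t).aestronglyMeasurable (max |b| |1 - b|)
    (ae_of_all _ fun x => ?_)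
  rw [Real.norm_eq_abs, switchFun]
  split_ifs
  · exact le_max_left _ _
  · exact le_max_right _ _

theorem measureReal_Ici_inter_Ioo (s a c : ℝ) :
    volume.real (Ici s ∩ Ioo a c) = max (c - max s a) 0 := by
  have h : (Ici s ∩ Ioo a c : Set ℝ) =ᵐ[volume] (Ioi s ∩ Ioo a c : Set ℝ) :=
    Ioi_ae_eq_Ici.symm.inter (ae_eq_refl _)
  rw [measureReal_def, measure_congr h, Ioi_inter_Ioo,
    Real.volume_Ioo, ENNReal.toReal_ofReal']

theorem integral_switchFun (b : ℝ) {t : Fin σ → ℝ} (ht : Monotone t) (a c : ℝ) :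
    ∫ x in Ioo a c, switchFun σ b t x = b * volume.real (Ioo a c) +
      (1 - 2 * b) * ∑ j : Fin σ, (-1) ^ (j : ℕ) * volume.real (Ici (t j) ∩ Ioo a c) := by
  have : IsFiniteMeasure (volume.restrict (Ioo a c)) :=
    isFiniteMeasure_restrict.mpr measure_Ioo_lt_top.ne
  have hind : ∀ j : Fin σ, Integrable ((Ici (t j)).indicator (1 : ℝ → ℝ))
      (volume.restrict (Ioo a c)) := fun j =>
    (integrable_const 1).indicator measurableSet_Ici
  simp_rw [switchFun_eq_sum_indicator b ht]
  rw [integral_add (integrable_const b)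
      ((integrable_finsetSum _ fun j _ => (hind j).const_mul _).const_mul _),
    integral_const, integral_const_mul, integral_finsetSum _ fun j _ => (hind j).const_mul _]
  simp_rw [integral_const_mul, integral_indicator_one measurableSet_Ici,
    measureReal_restrict_apply measurableSet_Ici, measureReal_restrict_apply_univ, smul_eq_mul,
    mul_comm b]

end SwitchFunction

section Overlaps

variable {σ M : ℕ} (A B : Fin M → ℝ)

def tripartition (a c : ℝ) : Fin 3 → Set ℝ := ![Iic a, Icc a c, Ici c]

theorem exists_mem_tripartition (a c s : ℝ) : ∃ k, s ∈ tripartition a c k := by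
  rcases le_total s a with h | h
  · exact ⟨0, h⟩
  rcases le_total s c with h' | h'
  · exact ⟨1, h, h'⟩
  · exact ⟨2, h'⟩

theorem isPolyhedron_tripartition (a c : ℝ) (k : Fin 3) :
    IsPolyhedron (tripartition a c k) := by
  fin_cases k
  exacts [isPolyhedron_Iic a, isPolyhedron_Icc a c, isPolyhedron_Ici c]

def overlapAffine (a c : ℝ) : Fin 3 → ℝ →ᵃ[ℝ] ℝ :=
  ![AffineMap.const ℝ ℝ (c - a), AffineMap.const ℝ ℝ c - AffineMap.id ℝ ℝ, 0]

theorem measureReal_Ici_inter_Ioo_eq_overlapAffine {a c s : ℝ} (hac : a ≤ c) {k : Fin 3}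
    (hs : s ∈ tripartition a c k) : volume.real (Ici s ∩ Ioo a c) = overlapAffine a c k s := by
  rw [measureReal_Ici_inter_Ioo]
  fin_cases k <;> simp [tripartition, overlapAffine] at hs ⊢
  · simp [max_eq_right hs, hac]
  · simp [max_eq_left hs.1, hs.2]
  · exact Or.inl hs

noncomputable def overlaps (t : Fin σ → ℝ) : Fin M → Fin σ → ℝ :=
  fun i j => volume.real (Ici (t j) ∩ Ioo (A i) (B i))

def patternRegion (r : Fin M → Fin σ → Fin 3) : Set (Fin σ → ℝ) :=
  {t | ∀ i j, t j ∈ tripartition (A i) (B i) (r i j)}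

noncomputable def overlapsAffine (r : Fin M → Fin σ → Fin 3) :
    (Fin σ → ℝ) →ᵃ[ℝ] (Fin M → Fin σ → ℝ) :=
  AffineMap.pi fun i => AffineMap.pi fun j =>
    (overlapAffine (A i) (B i) (r i j)).comp (LinearMap.proj j).toAffineMap

theorem isPolyhedron_patternRegion (r : Fin M → Fin σ → Fin 3) :
    IsPolyhedron (patternRegion A B r) := by
  have : patternRegion A B r =
      ⋂ (i) (j), LinearMap.proj (R := ℝ) (φ := fun _ : Fin σ => ℝ) j ⁻¹'
        tripartition (A i) (B i) (r i j) := by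
    ext
    simp [patternRegion]
  rw [this]
  exact .iInter fun i => .iInter fun j => (isPolyhedron_tripartition _ _ _).preimage _

theorem iUnion_patternRegion : ⋃ r, patternRegion (σ := σ) A B r = univ := by
  refine eq_univ_of_forall fun t => mem_iUnion.mpr ?_
  choose r hr using fun i j => exists_mem_tripartition (A i) (B i) (t j)
  exact ⟨r, hr⟩

theorem eqOn_overlaps_overlapsAffine (hAB : ∀ i, A i ≤ B i) (r : Fin M → Fin σ → Fin 3) :
    EqOn (overlaps A B) (overlapsAffine A B r) (patternRegion A B r) := fun t ht => by
  ext i j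
  exact measureReal_Ici_inter_Ioo_eq_overlapAffine (hAB i) (ht i j)

noncomputable def averageOfOverlaps (b : ℝ) : (Fin M → Fin σ → ℝ) →ᵃ[ℝ] (Fin M → ℝ) :=
  AffineMap.pi fun i => AffineMap.const ℝ _ b + ((1 - 2 * b) * (B i - A i)⁻¹) •
    (∑ j : Fin σ, (-1 : ℝ) ^ (j : ℕ) •
      (LinearMap.proj (R := ℝ) (φ := fun _ : Fin σ => ℝ) j ∘ₗ LinearMap.proj i)).toAffineMap

theorem averageOfOverlaps_apply (b : ℝ) (w : Fin M → Fin σ → ℝ) (i : Fin M) :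
    averageOfOverlaps A B b w i =
      b + (1 - 2 * b) * (B i - A i)⁻¹ * ∑ j : Fin σ, (-1) ^ (j : ℕ) * w i j := by
  simp [averageOfOverlaps]

theorem average_eq_averageOfOverlaps {U : Set ℝ} {u : ℝ → ℝ} (hAB : ∀ i, A i < B i)
    (hsub : ∀ i, Ioo (A i) (B i) ⊆ U) {b : ℝ} {t : Fin σ → ℝ} (ht : Monotone t)
    (hu : u =ᵐ[volume.restrict U] switchFun σ b t) :
    (fun i => (B i - A i)⁻¹ * ∫ x in Ioo (A i) (B i), u x ∂volume.restrict U) =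
      averageOfOverlaps A B b (overlaps A B t) := by
  ext i
  have hne : B i - A i ≠ 0 := (sub_pos.mpr (hAB i)).ne'
  rw [Measure.restrict_restrict_of_subset (hsub i),
    integral_congr_ae (ae_restrict_of_ae_restrict_of_subset (hsub i) hu),
    integral_switchFun b ht, Real.volume_real_Ioo_of_le (hAB i).le, averageOfOverlaps_apply]
  field_simp
  simp [overlaps]

end Overlaps

theorem image_average_eq_iUnion {σ M : ℕ} {A B : Fin M → ℝ} (hAB : ∀ i, A i < B i)
    {U : Set ℝ} (hU : volume U < ⊤) (hsub : ∀ i, Ioo (A i) (B i) ⊆ U) (p : ℝ≥0∞)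
    (S : Set (Fin σ → ℝ)) :
    (fun u : Lp ℝ p (volume.restrict U) =>
        fun i : Fin M => (B i - A i)⁻¹ * ∫ t in Ioo (A i) (B i), (u : ℝ → ℝ) t
          ∂(volume.restrict U)) ''
      {u : Lp ℝ p (volume.restrict U) |
        ∃ b : ℝ, (b = 0 ∨ b = 1) ∧ ∃ t : Fin σ → ℝ, Monotone t ∧ t ∈ S ∧
          (u : ℝ → ℝ) =ᵐ[volume.restrict U] switchFun σ b t} =
    ⋃ b : ({0, 1} : Set ℝ),
      averageOfOverlaps A B b '' (overlaps A B '' (S ∩ {t | Monotone t})) := by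
  ext v
  simp only [mem_image, mem_iUnion, mem_ofPred_eq, mem_inter_iff]
  constructor
  · rintro ⟨u, ⟨b, hb, t, ht, htS, hu⟩, rfl⟩
    exact ⟨⟨b, hb⟩, _, ⟨t, ⟨htS, ht⟩, rfl⟩,
      (average_eq_averageOfOverlaps A B hAB hsub ht hu).symm⟩
  · rintro ⟨⟨b, hb⟩, _, ⟨t, ⟨htS, ht⟩, rfl⟩, rfl⟩
    have hmem := memLp_switchFun b t p hU
    exact ⟨hmem.toLp _, ⟨b, hb, t, ht, htS, hmem.coeFn_toLp⟩,
      average_eq_averageOfOverlaps A B hAB hsub ht hmem.coeFn_toLp⟩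

theorem stmt_15
    (T : ℝ) (σ : ℕ) (p : ℝ≥0∞)
    (F : Finset (Fin σ → ℝ))
    (M : ℕ) (A B : Fin M → ℝ) (hAB : ∀ i, A i < B i)
    (hsub : ∀ i, Ioo (A i) (B i) ⊆ Ioo (0:ℝ) T) :
    ∃ F' : Finset (Fin M → ℝ),
      convexHull ℝ
        ((fun u : Lp ℝ p (volume.restrict (Ioo (0:ℝ) T)) =>
            fun i : Fin M => (B i - A i)⁻¹ *
              ∫ t in Ioo (A i) (B i), (u : ℝ → ℝ) t
                ∂(volume.restrict (Ioo (0:ℝ) T))) ''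
          {u : Lp ℝ p (volume.restrict (Ioo (0:ℝ) T)) |
            ∃ b : ℝ, (b = 0 ∨ b = 1) ∧ ∃ t : Fin σ → ℝ, Monotone t ∧
              t ∈ convexHull ℝ (F : Set (Fin σ → ℝ)) ∧
              (u : ℝ → ℝ) =ᵐ[volume.restrict (Ioo (0:ℝ) T)] switchFun σ b t}) =
      convexHull ℝ (F' : Set (Fin M → ℝ)) := by
  rw [image_average_eq_iUnion hAB measure_Ioo_lt_top hsub]
  have hP : IsPolytope (convexHull ℝ (F : Set (Fin σ → ℝ)) ∩ {t | Monotone t}) :=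
    IsPolytope.inter_isPolyhedron ⟨F, F.finite_toSet, rfl⟩ isPolyhedron_setOf_monotone
  have hO := hP.convexHull_image_of_eqOn (isPolyhedron_patternRegion A B)
    (eqOn_overlaps_overlapsAffine A B fun i => (hAB i).le)
  rw [iUnion_patternRegion, inter_univ] at hO
  refine (isPolytope_convexHull_iUnion fun b => ?_).exists_finset_eq
  rw [← AffineMap.image_convexHull]
  exact hO.image _
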